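/- In the double oracle algorithm applied to a finite two-player zero-sum game, if at some iteration the best responses to the current restricted Nash equilibrium are already contained in the current populations, then the restricted Nash equilibrium is a Nash equilibrium of the full game. -/
import Mathlib


theorem double_oracle_termination_nash
    {A1 A2 : Type*} [Fintype A1] [Fintype A2] [Nonempty A1] [Nonempty A2]
    [DecidableEq A1] [DecidableEq A2]
    (u1 u2 : A1 → A2 → ℝ) (hzs : ∀ a b, u1 a b + u2 a b = 0)
    (P1 : Finset A1) (P2 : Finset A2)
    (π1r : A1) (π2r : A2) (h1 : π1r ∈ P1) (h2 : π2r ∈ P2)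
    (hres1 : u1 π1r π2r = P1.sup' ⟨π1r, h1⟩ fun a => u1 a π2r)
    (hres2 : u2 π1r π2r = P2.sup' ⟨π2r, h2⟩ fun b => u2 π1r b)
    (hbr1 : ∃ b1 ∈ P1, u1 b1 π2r = Finset.univ.sup' Finset.univ_nonempty fun a => u1 a π2r)
    (hbr2 : ∃ b2 ∈ P2, u2 π1r b2 = Finset.univ.sup' Finset.univ_nonempty fun b => u2 π1r b) :
    (u1 π1r π2r = Finset.univ.sup' Finset.univ_nonempty fun a => u1 a π2r)
      ∧ (u2 π1r π2r = Finset.univ.sup' Finset.univ_nonempty fun b => u2 π1r b) := by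
  obtain ⟨b1, hb1, he1⟩ := hbr1
  obtain ⟨b2, hb2, he2⟩ := hbr2
  constructor
  · refine le_antisymm ?_ ?_
    · exact Finset.le_sup' (fun a => u1 a π2r) (Finset.mem_univ π1r)
    · rw [← he1, hres1]
      exact Finset.le_sup' (fun a => u1 a π2r) hb1
  · refine le_antisymm ?_ ?_
    · exact Finset.le_sup' (fun b => u2 π1r b) (Finset.mem_univ π2r)
    · rw [← he2, hres2]
      exact Finset.le_sup' (fun b => u2 π1r b) hb2
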